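/- arXiv:2309.16105 — 4 statements merged into one kernel-verified Lean document; each statement's English description precedes it below -/
import Mathlib

section
/- Let X be a real random variable with E[X] = 0 and E[X^2] = γ² > 0, and let Z = (Z_1,...,Z_n) be a random vector independent of X with E[Z_i] = 0 for all i. Given ν_1,...,ν_n ∈ ℝ, define y_i = ν_i X + Z_i. Let K₁ be the n×n matrix with entries E[y_i y_j] and K₂ the covariance matrix of Z. If K₁ is invertible, then inf over w ∈ ℝⁿ of E[(w·y − X)²] equals γ² / (1 + SNR), where SNR = det(K₁)/det(K₂) − 1. -/
open MeasureTheory ProbabilityTheory Matrix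

/-!
Since `X` is orthogonal to every `Zᵢ`, the second moments of `y = ν X + Z` are
`E[y yᵀ] = γ² ν νᵀ + K₂` and `E[y X] = γ² ν`. Hence the mean squared error of `w` is the quadratic
`w ⬝ K₁ w - 2 γ² (w ⬝ ν) + γ²`, and completing the square (`K₁` is positive semidefinite and
invertible) gives the minimum `γ² (1 - γ² ν ⬝ K₁⁻¹ ν)`. By the matrix determinant lemma applied to
`K₂ = K₁ - γ² ν νᵀ`, the factor `1 - γ² ν ⬝ K₁⁻¹ ν` is `det K₂ / det K₁`.
-/

namespace Matrix

variable {ι : Type*} [Fintype ι] [DecidableEq ι]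

theorem det_add_vecMulVec {R : Type*} [CommRing R] {A : Matrix ι ι R} (hA : IsUnit A.det)
    (u v : ι → R) : (A + vecMulVec u v).det = A.det * (1 + v ⬝ᵥ A⁻¹ *ᵥ u) := by
  rw [vecMulVec_eq Unit, det_add_replicateCol_mul_replicateRow hA, det_unique (1 + _),
    add_apply, one_apply_eq, ← replicateRow_vecMul, replicateRow_mul_replicateCol_apply,
    ← dotProduct_mulVec]

theorem PosSemidef.isLeast_range_quadratic {K : Matrix ι ι ℝ} (hK : K.PosSemidef)
    (hdet : IsUnit K.det) (b : ι → ℝ) (c : ℝ) :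
    IsLeast (Set.range fun w => w ⬝ᵥ K *ᵥ w - 2 * (w ⬝ᵥ b) + c) (c - b ⬝ᵥ K⁻¹ *ᵥ b) := by
  set w₀ := K⁻¹ *ᵥ b
  have hKw₀ : K *ᵥ w₀ = b := by rw [mulVec_mulVec, mul_nonsing_inv _ hdet, one_mulVec]
  have hw₀K : ∀ v, w₀ ⬝ᵥ K *ᵥ v = v ⬝ᵥ b := fun v => by
    rw [dotProduct_mulVec, ← (isHermitian_iff_isSymm.mp hK.1).eq, vecMul_transpose, hKw₀,
      dotProduct_comm]
  refine ⟨⟨w₀, ?_⟩, ?_⟩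
  · simp only [hKw₀, dotProduct_comm w₀ b]
    ring
  · rintro _ ⟨w, rfl⟩
    have hsq := hK.dotProduct_mulVec_nonneg (w - w₀)
    rw [star_trivial, mulVec_sub, dotProduct_sub, sub_dotProduct, sub_dotProduct, hw₀K, hw₀K,
      hKw₀, dotProduct_comm w₀ b] at hsq
    dsimp only
    linarith

end Matrix

section SecondMoments

variable {Ω ι : Type*} [MeasurableSpace Ω] {μ : Measure Ω}

noncomputable def secondMomentMatrix (μ : Measure Ω) (y : ι → Ω → ℝ) : Matrix ι ι ℝ :=
  Matrix.of fun i j => ∫ ω, y i ω * y j ω ∂μ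

theorem integral_mul_const_mul_add {g X Z : Ω → ℝ} (hg : MemLp g 2 μ) (hX : MemLp X 2 μ)
    (hZ : MemLp Z 2 μ) (a : ℝ) :
    ∫ ω, g ω * (a * X ω + Z ω) ∂μ = a * ∫ ω, g ω * X ω ∂μ + ∫ ω, g ω * Z ω ∂μ := by
  have hgX : Integrable (fun ω => a * (g ω * X ω)) μ := (hg.integrable_mul hX).const_mul a
  have hgZ : Integrable (fun ω => g ω * Z ω) μ := hg.integrable_mul hZ
  simp only [mul_add, mul_left_comm (g _)]
  rw [integral_add hgX hgZ, integral_const_mul]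

theorem integral_const_mul_add_mul {g X Z : Ω → ℝ} (hg : MemLp g 2 μ) (hX : MemLp X 2 μ)
    (hZ : MemLp Z 2 μ) (a : ℝ) :
    ∫ ω, (a * X ω + Z ω) * g ω ∂μ = a * ∫ ω, X ω * g ω ∂μ + ∫ ω, Z ω * g ω ∂μ := by
  simp only [mul_comm _ (g _)]
  exact integral_mul_const_mul_add hg hX hZ a

section SignalAddNoise

variable {X : Ω → ℝ} {Z : ι → Ω → ℝ}

theorem integral_signal_add_noise_mul (hX : MemLp X 2 μ) (hZ : ∀ i, MemLp (Z i) 2 μ)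
    (horth : ∀ i, ∫ ω, X ω * Z i ω ∂μ = 0) (ν : ι → ℝ) :
    (fun i => ∫ ω, (ν i * X ω + Z i ω) * X ω ∂μ) = (∫ ω, X ω ^ 2 ∂μ) • ν := by
  ext i
  rw [integral_const_mul_add_mul hX hX (hZ i)]
  simp only [sq, mul_comm (Z i _), horth, add_zero, Pi.smul_apply, smul_eq_mul, mul_comm]

theorem secondMomentMatrix_signal_add_noise (hX : MemLp X 2 μ) (hZ : ∀ i, MemLp (Z i) 2 μ)
    (horth : ∀ i, ∫ ω, X ω * Z i ω ∂μ = 0) (ν : ι → ℝ) :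
    secondMomentMatrix μ (fun i ω => ν i * X ω + Z i ω) =
      (∫ ω, X ω ^ 2 ∂μ) • vecMulVec ν ν + secondMomentMatrix μ Z := by
  ext i j
  have hy : ∀ k, MemLp (fun ω => ν k * X ω + Z k ω) 2 μ := fun k => (hX.const_mul _).add (hZ k)
  have hcross := congr_fun (integral_signal_add_noise_mul hX hZ horth ν) i
  simp only [secondMomentMatrix, of_apply, Matrix.add_apply, Matrix.smul_apply, vecMulVec_apply,
    smul_eq_mul, Pi.smul_apply] at hcross ⊢
  rw [integral_mul_const_mul_add (hy i) hX (hZ j), hcross,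
    integral_const_mul_add_mul (hZ j) hX (hZ i), horth, mul_zero, zero_add]
  ring

end SignalAddNoise

variable [Fintype ι]

theorem integral_sum_mul {y : ι → Ω → ℝ} {g : Ω → ℝ} (hy : ∀ i, MemLp (y i) 2 μ)
    (hg : MemLp g 2 μ) (w : ι → ℝ) :
    ∫ ω, (∑ i, w i * y i ω) * g ω ∂μ = w ⬝ᵥ fun i => ∫ ω, y i ω * g ω ∂μ := by
  have hint : ∀ i, Integrable (fun ω => w i * (y i ω * g ω)) μ := fun i =>
    ((hy i).integrable_mul hg).const_mul (w i)
  simp only [Finset.sum_mul, mul_assoc]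
  rw [integral_finsetSum _ fun i _ => hint i]
  simp only [integral_const_mul, dotProduct]

theorem memLp_sum_mul {y : ι → Ω → ℝ} (hy : ∀ i, MemLp (y i) 2 μ) (w : ι → ℝ) :
    MemLp (fun ω => ∑ i, w i * y i ω) 2 μ :=
  memLp_finsetSum _ fun i _ => (hy i).const_mul (w i)

theorem integral_sum_mul_sq {y : ι → Ω → ℝ} (hy : ∀ i, MemLp (y i) 2 μ) (w : ι → ℝ) :
    ∫ ω, (∑ i, w i * y i ω) ^ 2 ∂μ = w ⬝ᵥ secondMomentMatrix μ y *ᵥ w := by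
  simp only [sq, integral_sum_mul hy (memLp_sum_mul hy w)]
  congr 1
  ext i
  simp only [mul_comm (y i _), integral_sum_mul hy (hy i), mulVec, dotProduct,
    secondMomentMatrix, of_apply]
  refine Finset.sum_congr rfl fun j _ => ?_
  simp only [mul_comm (y j _), mul_comm (w j)]

theorem posSemidef_secondMomentMatrix {y : ι → Ω → ℝ} (hy : ∀ i, MemLp (y i) 2 μ) :
    (secondMomentMatrix μ y).PosSemidef := by
  refine .of_dotProduct_mulVec_nonneg (isHermitian_iff_isSymm.mpr ?_) fun w => ?_
  · ext i j
    simp only [secondMomentMatrix, transpose_apply, of_apply, mul_comm]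
  · rw [star_trivial, ← integral_sum_mul_sq hy]
    exact integral_nonneg fun ω => sq_nonneg _

theorem integral_sum_mul_sub_sq {y : ι → Ω → ℝ} {X : Ω → ℝ} (hy : ∀ i, MemLp (y i) 2 μ)
    (hX : MemLp X 2 μ) (w : ι → ℝ) :
    ∫ ω, (∑ i, w i * y i ω - X ω) ^ 2 ∂μ =
      w ⬝ᵥ secondMomentMatrix μ y *ᵥ w - 2 * (w ⬝ᵥ fun i => ∫ ω, y i ω * X ω ∂μ) +
        ∫ ω, X ω ^ 2 ∂μ := by
  have hS := memLp_sum_mul hy w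
  have hSX : Integrable (fun ω => 2 * ((∑ i, w i * y i ω) * X ω)) μ :=
    (hS.integrable_mul hX).const_mul 2
  have hS2X2 : Integrable (fun ω => (∑ i, w i * y i ω) ^ 2 + X ω ^ 2) μ :=
    hS.integrable_sq.add hX.integrable_sq
  simp only [sub_sq', mul_assoc]
  rw [integral_sub hS2X2 hSX, integral_add hS.integrable_sq hX.integrable_sq, integral_const_mul,
    integral_sum_mul_sq hy, integral_sum_mul hy hX]
  ring

theorem iInf_integral_sum_mul_sub_sq [DecidableEq ι] {y : ι → Ω → ℝ} {X : Ω → ℝ}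
    (hy : ∀ i, MemLp (y i) 2 μ) (hX : MemLp X 2 μ)
    (hdet : IsUnit (secondMomentMatrix μ y).det) :
    ⨅ w : ι → ℝ, ∫ ω, (∑ i, w i * y i ω - X ω) ^ 2 ∂μ =
      ∫ ω, X ω ^ 2 ∂μ - (fun i => ∫ ω, y i ω * X ω ∂μ) ⬝ᵥ
        (secondMomentMatrix μ y)⁻¹ *ᵥ fun i => ∫ ω, y i ω * X ω ∂μ := by
  simp only [integral_sum_mul_sub_sq hy hX]
  exact ((posSemidef_secondMomentMatrix hy).isLeast_range_quadratic hdet _ _).csInf_eq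

end SecondMoments

theorem stmt_0_general {Ω : Type*} [MeasurableSpace Ω] (μ : Measure Ω)
    {n : ℕ} (X : Ω → ℝ) (Z : Fin n → Ω → ℝ) (ν : Fin n → ℝ) (γ : ℝ)
    (hXL2 : MemLp X 2 μ) (hZL2 : ∀ i, MemLp (Z i) 2 μ)
    (hXmean : ∫ ω, X ω ∂μ = 0) (hXvar : ∫ ω, (X ω) ^ 2 ∂μ = γ ^ 2)
    (hindep : IndepFun X (fun ω i => Z i ω) μ)
    (y : Fin n → Ω → ℝ) (hy : ∀ i ω, y i ω = ν i * X ω + Z i ω)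
    (K₁ K₂ : Matrix (Fin n) (Fin n) ℝ)
    (hK₁ : ∀ i j, K₁ i j = ∫ ω, y i ω * y j ω ∂μ)
    (hK₂ : ∀ i j, K₂ i j = ∫ ω, Z i ω * Z j ω ∂μ)
    (hK₁inv : IsUnit K₁.det) :
    (⨅ w : Fin n → ℝ, ∫ ω, ((∑ i, w i * y i ω) - X ω) ^ 2 ∂μ)
      = γ ^ 2 / (1 + (K₁.det / K₂.det - 1)) := by
  obtain rfl : y = fun i ω => ν i * X ω + Z i ω := funext fun i => funext (hy i)
  have horth : ∀ i, ∫ ω, X ω * Z i ω ∂μ = 0 := fun i => by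
    have hXZ : IndepFun X (Z i) μ := hindep.comp measurable_id (measurable_pi_apply i)
    exact (hXZ.integral_mul_eq_mul_integral hXL2.aestronglyMeasurable
      (hZL2 i).aestronglyMeasurable).trans (by rw [hXmean, zero_mul])
  have hyL2 : ∀ i, MemLp (fun ω => ν i * X ω + Z i ω) 2 μ := fun i =>
    (hXL2.const_mul _).add (hZL2 i)
  have hK₁' : K₁ = secondMomentMatrix μ _ := Matrix.ext hK₁
  have hdet : K₂.det = K₁.det * (1 - γ ^ 2 * (ν ⬝ᵥ K₁⁻¹ *ᵥ ν)) := by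
    have hK₂' : K₂ = K₁ + vecMulVec (-γ ^ 2 • ν) ν := by
      rw [hK₁', secondMomentMatrix_signal_add_noise hXL2 hZL2 horth, hXvar,
        ← (Matrix.ext hK₂ : K₂ = secondMomentMatrix μ Z), ← smul_vecMulVec, neg_smul,
        neg_vecMulVec, add_neg_cancel_comm]
    rw [hK₂', det_add_vecMulVec hK₁inv, mulVec_smul, dotProduct_smul, smul_eq_mul]
    ring
  -- `a / (b / c) = a * c / b` holds also when `det K₂ = 0`, where both sides vanish.
  rw [iInf_integral_sum_mul_sub_sq hyL2 hXL2 (hK₁' ▸ hK₁inv), ← hK₁',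
    integral_signal_add_noise_mul hXL2 hZL2 horth, add_sub_cancel, div_div_eq_mul_div, hdet, hXvar]
  field_simp [hK₁inv.ne_zero]
  simp only [smul_dotProduct, mulVec_smul, dotProduct_smul, smul_eq_mul]
  ring

/-- Linear MMSE lemma: the infimum over linear estimators `w · y` of the mean squared
error of estimating a zero-mean signal `X` from observations `y i = ν i * X + Z i`
equals `γ² / (1 + SNR)` where `SNR = det K₁ / det K₂ − 1`. -/
theorem stmt_0 {Ω : Type*} [MeasurableSpace Ω] (μ : Measure Ω) [IsProbabilityMeasure μ]
    {n : ℕ} (X : Ω → ℝ) (Z : Fin n → Ω → ℝ) (ν : Fin n → ℝ) (γ : ℝ)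
    (hγ : 0 < γ)
    (hXmeas : Measurable X) (hZmeas : ∀ i, Measurable (Z i))
    (hXL2 : MemLp X 2 μ) (hZL2 : ∀ i, MemLp (Z i) 2 μ)
    (hXmean : ∫ ω, X ω ∂μ = 0) (hXvar : ∫ ω, (X ω) ^ 2 ∂μ = γ ^ 2)
    (hZmean : ∀ i, ∫ ω, Z i ω ∂μ = 0)
    (hindep : IndepFun X (fun ω i => Z i ω) μ)
    (y : Fin n → Ω → ℝ) (hy : ∀ i ω, y i ω = ν i * X ω + Z i ω)
    (K₁ K₂ : Matrix (Fin n) (Fin n) ℝ)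
    (hK₁ : ∀ i j, K₁ i j = ∫ ω, y i ω * y j ω ∂μ)
    (hK₂ : ∀ i j, K₂ i j = ∫ ω, Z i ω * Z j ω ∂μ)
    (hK₁inv : IsUnit K₁.det) :
    (⨅ w : Fin n → ℝ, ∫ ω, ((∑ i, w i * y i ω) - X ω) ^ 2 ∂μ)
      = γ ^ 2 / (1 + (K₁.det / K₂.det - 1)) :=
  stmt_0_general μ X Z ν γ hXL2 hZL2 hXmean hXvar hindep y hy K₁ K₂ hK₁ hK₂ hK₁inv
end

section
/- Let w_1,...,w_N ∈ ℝ^N be vectors and S a subset of {1,...,N} with |S| ≤ t, where for any linear combination w = Σ_{i∈S} β_i w_{s_i} with coordinates (w₁,...,w_N), one has w₁² / (w₂² + ... + w_N²) ≤ SNR_S whenever the denominator is nonzero (with the convention SNR_S = ∞ if e₁ lies in the span). If e₁ = (1,0,...,0) does not lie in span{w_i : i ∈ S}, then there exists a nonzero vector λ ∈ ℝ^N orthogonal to all w_i, i ∈ S, such that λ₁²/‖λ‖² ≥ 1/(1 + SNR_S). -/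
/-!
Decompose `e₁ = w̄ + λ` with `w̄` in the span and `λ` orthogonal to it. As `λ ⊥ w̄`,
`⟪e₁, λ⟫ = ‖λ‖² =: a`, so `λ₁² / ‖λ‖² = a`, while `w̄₁ = 1 - a` and the component of `w̄`
orthogonal to `e₁` has squared norm `a (1 - a)`. The SNR bound for `w̄` reads
`(1 - a)² ≤ SNR · a (1 - a)`, which forces `a ≥ 1 / (1 + SNR)`.
-/

open RealInnerProductSpace

lemma one_div_one_add_le_of_sq_one_sub_le {snr a : ℝ} (hsnr : 0 ≤ snr) (ha : 0 < a)
    (h : (1 - a) ^ 2 ≤ snr * (a * (1 - a))) : 1 / (1 + snr) ≤ a := by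
  rw [div_le_iff₀ (by positivity)]
  rcases le_or_gt 1 a with ha1 | ha1
  · nlinarith
  · have : 1 - a ≤ snr * a := by nlinarith
    linarith

theorem Submodule.exists_mem_orthogonal_inner_sq_div_norm_sq_ge {E : Type*}
    [NormedAddCommGroup E] [InnerProductSpace ℝ E] (K : Submodule ℝ E)
    [K.HasOrthogonalProjection] {e : E} (he : ‖e‖ = 1) (heK : e ∉ K) {snr : ℝ} (hsnr : 0 ≤ snr)
    (hbound : ∀ v ∈ K, ⟪e, v⟫ ^ 2 ≤ snr * ‖v - ⟪e, v⟫ • e‖ ^ 2) :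
    ∃ lam ∈ Kᗮ, lam ≠ 0 ∧ 1 / (1 + snr) ≤ ⟪e, lam⟫ ^ 2 / ‖lam‖ ^ 2 := by
  obtain ⟨v, hvK, lam, hlamK, hv⟩ : ∃ v ∈ K, ∃ lam ∈ Kᗮ, v = e - lam :=
    ⟨_, K.starProjection_apply_mem e, _, K.sub_starProjection_mem_orthogonal e, by abel⟩
  have hlam0 : lam ≠ 0 := by rintro rfl; exact heK (by simpa [hv] using hvK)
  have ha : 0 < ‖lam‖ ^ 2 := by positivity
  have he_lam : ⟪e, lam⟫ = ‖lam‖ ^ 2 := by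
    have h := K.inner_left_of_mem_orthogonal hvK hlamK
    rw [hv, inner_sub_right, real_inner_self_eq_norm_sq, real_inner_comm] at h
    linarith
  have hv_e : ⟪e, v⟫ = 1 - ‖lam‖ ^ 2 := by
    rw [hv, inner_sub_right, he_lam, real_inner_self_eq_norm_sq, he, one_pow]
  have hv_perp : ‖v - ⟪e, v⟫ • e‖ ^ 2 = ‖lam‖ ^ 2 * (1 - ‖lam‖ ^ 2) := by
    rw [hv_e, hv, show e - lam - (1 - ‖lam‖ ^ 2) • e = ‖lam‖ ^ 2 • e - lam by module,
      norm_sub_sq_real, norm_smul, real_inner_smul_left, he_lam, he, Real.norm_of_nonneg ha.le]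
    ring
  have hsnr_v := hbound v hvK
  rw [hv_perp, hv_e] at hsnr_v
  refine ⟨lam, hlamK, hlam0, ?_⟩
  rw [he_lam, sq (‖lam‖ ^ 2), mul_div_cancel_right₀ _ ha.ne']
  exact one_div_one_add_le_of_sq_one_sub_le hsnr ha hsnr_v

lemma EuclideanSpace.norm_sub_smul_single_sq {ι : Type*} [Fintype ι] [DecidableEq ι]
    (x : EuclideanSpace ℝ ι) (i : ι) :
    ‖x - x i • EuclideanSpace.single i 1‖ ^ 2 = ∑ j ∈ Finset.univ.erase i, x j ^ 2 := by
  rw [EuclideanSpace.real_norm_sq_eq, ← Finset.add_sum_erase _ _ (Finset.mem_univ i),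
    ← zero_add (∑ j ∈ Finset.univ.erase i, x j ^ 2)]
  congr 1
  · simp
  · exact Finset.sum_congr rfl fun j hj => by simp [Finset.ne_of_mem_erase hj]

theorem stmt_4_general {N : ℕ} [NeZero N] (w : Fin N → Fin N → ℝ) (S : Finset (Fin N))
    (snr : ℝ) (hsnr : 0 ≤ snr)
    (hbound : ∀ v ∈ Submodule.span ℝ (w '' ↑S),
      (v 0) ^ 2 ≤ snr * ∑ j ∈ Finset.univ.erase 0, (v j) ^ 2)
    (he₁ : (Pi.single 0 1 : Fin N → ℝ) ∉ Submodule.span ℝ (w '' ↑S)) :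
    ∃ lam : Fin N → ℝ, lam ≠ 0 ∧ (∀ i ∈ S, ∑ j, lam j * w i j = 0) ∧
      1 / (1 + snr) ≤ (lam 0) ^ 2 / (∑ j, (lam j) ^ 2) := by
  let K := (Submodule.span ℝ (w '' ↑S)).comap (WithLp.linearEquiv 2 ℝ (Fin N → ℝ)).toLinearMap
  obtain ⟨lam, hlamK, hlam0, hratio⟩ :=
    K.exists_mem_orthogonal_inner_sq_div_norm_sq_ge (e := EuclideanSpace.single 0 1)
      (by simp) (by simpa [K] using he₁) hsnr fun v hv => by
        simpa [EuclideanSpace.inner_single_left, EuclideanSpace.norm_sub_smul_single_sq]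
          using hbound _ hv
  refine ⟨WithLp.ofLp lam, by simpa using hlam0, fun i hi => ?_, ?_⟩
  · have hwK : WithLp.toLp 2 (w i) ∈ K := Submodule.subset_span ⟨i, hi, rfl⟩
    simpa [PiLp.inner_apply, mul_comm] using K.inner_left_of_mem_orthogonal hwK hlamK
  · simpa [EuclideanSpace.inner_single_left, EuclideanSpace.real_norm_sq_eq] using hratio

/-- Null-vector lemma: if every vector `v` in the span of `{w i : i ∈ S}` satisfies
`(v 0)² ≤ SNR_S · Σ_{j ≠ 0} (v j)²`, and the first standard basis vector is not in the
span, then there is a nonzero `λ` orthogonal to all `w i`, `i ∈ S`, with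
`λ₀²/‖λ‖² ≥ 1/(1 + SNR_S)`. -/
theorem stmt_4 {N t : ℕ} [NeZero N] (w : Fin N → Fin N → ℝ) (S : Finset (Fin N))
    (hS : S.card ≤ t) (snr : ℝ) (hsnr : 0 ≤ snr)
    (hbound : ∀ v ∈ Submodule.span ℝ (w '' ↑S),
      (v 0) ^ 2 ≤ snr * ∑ j ∈ Finset.univ.erase 0, (v j) ^ 2)
    (he₁ : (Pi.single 0 1 : Fin N → ℝ) ∉ Submodule.span ℝ (w '' ↑S)) :
    ∃ lam : Fin N → ℝ, lam ≠ 0 ∧ (∀ i ∈ S, ∑ j, lam j * w i j = 0) ∧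
      1 / (1 + snr) ≤ (lam 0) ^ 2 / (∑ j, (lam j) ^ 2) :=
  stmt_4_general w S snr hsnr hbound he₁
end

section
/- For the N = t scheme where node i receives Ã_i = A + R̃_i and B̃_i = B + S̃_i with (R̃_i), (S̃_i) zero-mean noise independent of (A,B) and of each other, any linear decoder C̃ = Σ w_i Ã_i B̃_i satisfies E[(C̃ − AB)²] ≥ E[(Σ w_i Ã_i B − AB)²] ≥ η²/(1 + SNR_p), where η = E[A²] = E[B²] and SNR_p bounds the achievable SNR for estimating A from (Ã_i)_{i=1}^N. -/
/-!
The decoding error splits as `(Σ wᵢ Ãᵢ − A) B + Σ wᵢ Ãᵢ S̃ᵢ`. The noise `S̃` is independent of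
`(A, B, R̃)` and centred, so the second summand is orthogonal to the first and second moments
add. The first summand is the error of the linear estimate `Σ wᵢ Ãᵢ` of `A`, scaled by the
independent factor `B`, so its second moment is that estimation error times `E[B²] = η`.
-/

open MeasureTheory ProbabilityTheory

instance ENNReal.holderTriple_four_four_two : ENNReal.HolderTriple 4 4 2 :=
  ⟨by rw [← two_mul, show (4 : ENNReal) = 2 * 2 by norm_num,
    ENNReal.mul_inv (by norm_num) (by norm_num), ← mul_assoc,
    ENNReal.mul_inv_cancel (by norm_num) (by norm_num), one_mul]⟩

section

variable {Ω α ι : Type*} [MeasurableSpace Ω] [MeasurableSpace α] {μ : Measure Ω}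

lemma integral_add_sq_eq_of_integral_mul_eq_zero {F G : Ω → ℝ} (hF : MemLp F 2 μ)
    (hG : MemLp G 2 μ) (hFG : ∫ ω, F ω * G ω ∂μ = 0) :
    ∫ ω, (F ω + G ω) ^ 2 ∂μ = ∫ ω, F ω ^ 2 ∂μ + ∫ ω, G ω ^ 2 ∂μ := by
  have hFG_int : Integrable (fun ω => 2 * (F ω * G ω)) μ := (hF.integrable_mul hG).const_mul 2
  have hsum_int : Integrable (fun ω => F ω ^ 2 + 2 * (F ω * G ω)) μ :=
    hF.integrable_sq.add hFG_int
  calc ∫ ω, (F ω + G ω) ^ 2 ∂μ = ∫ ω, F ω ^ 2 + 2 * (F ω * G ω) + G ω ^ 2 ∂μ := by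
        congr 1; ext ω; ring
    _ = ∫ ω, F ω ^ 2 ∂μ + 2 * ∫ ω, F ω * G ω ∂μ + ∫ ω, G ω ^ 2 ∂μ := by
        rw [integral_add hsum_int hG.integrable_sq,
          integral_add hF.integrable_sq hFG_int, integral_const_mul]
    _ = ∫ ω, F ω ^ 2 ∂μ + ∫ ω, G ω ^ 2 ∂μ := by rw [hFG]; ring

lemma integral_sq_le_integral_add_sq_of_integral_mul_eq_zero {F G : Ω → ℝ} (hF : MemLp F 2 μ)
    (hG : MemLp G 2 μ) (hFG : ∫ ω, F ω * G ω ∂μ = 0) :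
    ∫ ω, F ω ^ 2 ∂μ ≤ ∫ ω, (F ω + G ω) ^ 2 ∂μ := by
  rw [integral_add_sq_eq_of_integral_mul_eq_zero hF hG hFG]
  exact le_add_of_nonneg_right (integral_nonneg fun ω => sq_nonneg _)

lemma integral_comp_mul_eq_zero_of_indepFun {Z : Ω → α} {Y : Ω → ℝ}
    (hind : IndepFun Z Y μ) (hZ : AEMeasurable Z μ) (hY : AEStronglyMeasurable Y μ)
    (hY₀ : ∫ ω, Y ω ∂μ = 0)
    {φ : α → ℝ} (hφ : Measurable φ) :
    ∫ ω, φ (Z ω) * Y ω ∂μ = 0 := by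
  have h := (hind.comp hφ measurable_id).integral_fun_mul_eq_mul_integral
    (hφ.comp_aemeasurable hZ).aestronglyMeasurable hY
  simp only [Function.comp_apply, id] at h
  rw [h, hY₀, mul_zero]

/-- Centred noise independent of `Z`, entering linearly with `Z`-measurable coefficients, is
orthogonal to every `Z`-measurable error, so it can only increase the second moment. -/
lemma integral_sq_le_integral_add_sum_mul_noise [Fintype ι] {Z : Ω → α} {S : ι → Ω → ℝ}
    (hind : IndepFun Z (fun ω i => S i ω) μ) (hZ : AEMeasurable Z μ)
    (hS : ∀ i, AEStronglyMeasurable (S i) μ) (hS₀ : ∀ i, ∫ ω, S i ω ∂μ = 0)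
    {f : α → ℝ} {g : ι → α → ℝ} (hf : Measurable f) (hg : ∀ i, Measurable (g i))
    (hfZ : MemLp (fun ω => f (Z ω)) 2 μ)
    (hgS : ∀ i, MemLp (fun ω => g i (Z ω) * S i ω) 2 μ) :
    ∫ ω, f (Z ω) ^ 2 ∂μ ≤ ∫ ω, (f (Z ω) + ∑ i, g i (Z ω) * S i ω) ^ 2 ∂μ := by
  refine integral_sq_le_integral_add_sq_of_integral_mul_eq_zero hfZ
    (memLp_finsetSum _ fun i _ => hgS i) ?_
  have hterm : ∀ i, ∫ ω, f (Z ω) * (g i (Z ω) * S i ω) ∂μ = 0 := fun i => by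
    simp_rw [← mul_assoc]
    have hind_i : IndepFun Z (S i) μ := hind.comp measurable_id (measurable_pi_apply i)
    exact integral_comp_mul_eq_zero_of_indepFun (φ := fun z => f z * g i z) hind_i hZ (hS i)
      (hS₀ i) (hf.mul (hg i))
  simp_rw [Finset.mul_sum]
  rw [integral_finsetSum _ fun i _ => ?_]
  · exact Finset.sum_eq_zero fun i _ => hterm i
  · exact hfZ.integrable_mul (hgS i)

lemma ProbabilityTheory.IndepFun.integral_mul_sq {X Y : Ω → ℝ} (hind : IndepFun X Y μ)
    (hX : AEStronglyMeasurable X μ) (hY : AEStronglyMeasurable Y μ) :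
    ∫ ω, (X ω * Y ω) ^ 2 ∂μ = (∫ ω, X ω ^ 2 ∂μ) * ∫ ω, Y ω ^ 2 ∂μ := by
  simp_rw [mul_pow]
  have hind_sq : IndepFun (fun ω => X ω ^ 2) (fun ω => Y ω ^ 2) μ :=
    hind.comp (measurable_id.pow_const 2) (measurable_id.pow_const 2)
  exact hind_sq.integral_fun_mul_eq_mul_integral (hX.pow 2) (hY.pow 2)

end

theorem stmt_8_general {Ω : Type*} [MeasurableSpace Ω] (μ : Measure Ω)
    {N : ℕ} (A B : Ω → ℝ) (R S : Fin N → Ω → ℝ) (η snrp : ℝ)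
    (hA4 : MemLp A 4 μ) (hB4 : MemLp B 4 μ)
    (hR4 : ∀ i, MemLp (R i) 4 μ) (hS4 : ∀ i, MemLp (S i) 4 μ)
    (hB_indep : IndepFun (fun ω => (A ω, fun i => R i ω)) B μ)
    (hS_indep : IndepFun (fun ω => (A ω, B ω, fun i => R i ω)) (fun ω i => S i ω) μ)
    (hB2 : ∫ ω, (B ω) ^ 2 ∂μ = η)
    (hSmean : ∀ i, ∫ ω, S i ω ∂μ = 0)
    (hSNR : ∀ w : Fin N → ℝ,
      η / (1 + snrp) ≤ ∫ ω, ((∑ i, w i * (A ω + R i ω)) - A ω) ^ 2 ∂μ) :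
    ∀ w : Fin N → ℝ,
      (∫ ω, ((∑ i, w i * (A ω + R i ω) * B ω) - A ω * B ω) ^ 2 ∂μ
        ≤ ∫ ω, ((∑ i, w i * (A ω + R i ω) * (B ω + S i ω)) - A ω * B ω) ^ 2 ∂μ) ∧
      η ^ 2 / (1 + snrp)
        ≤ ∫ ω, ((∑ i, w i * (A ω + R i ω) * B ω) - A ω * B ω) ^ 2 ∂μ := by
  intro w
  have hη : 0 ≤ η := hB2 ▸ integral_nonneg fun ω => sq_nonneg _
  have hÃ4 : ∀ i, MemLp (fun ω => w i * (A ω + R i ω)) 4 μ := fun i =>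
    (hA4.add (hR4 i)).const_mul (w i)
  have herr4 : MemLp (fun ω => (∑ i, w i * (A ω + R i ω)) - A ω) 4 μ :=
    (memLp_finsetSum _ fun i _ => hÃ4 i).sub hA4
  have hfactor : ∀ ω, (∑ i, w i * (A ω + R i ω) * B ω) - A ω * B ω
      = ((∑ i, w i * (A ω + R i ω)) - A ω) * B ω := fun ω => by
    rw [sub_mul, Finset.sum_mul]
  have hsplit : ∀ ω, (∑ i, w i * (A ω + R i ω) * (B ω + S i ω)) - A ω * B ω
      = ((∑ i, w i * (A ω + R i ω) * B ω) - A ω * B ω)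
        + ∑ i, w i * (A ω + R i ω) * S i ω :=
    fun ω => by simp only [mul_add, Finset.sum_add_distrib]; ring
  constructor
  · have hF2 : MemLp (fun ω => (∑ i, w i * (A ω + R i ω) * B ω) - A ω * B ω) 2 μ := by
      simp_rw [hfactor]
      exact hB4.mul' herr4
    have hZ : AEMeasurable (fun ω => (A ω, B ω, fun i => R i ω)) μ :=
      hA4.aemeasurable.prodMk
        (hB4.aemeasurable.prodMk (aemeasurable_pi_lambda _ fun i => (hR4 i).aemeasurable))
    simp_rw [hsplit]
    exact integral_sq_le_integral_add_sum_mul_noise hS_indep hZ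
      (fun i => (hS4 i).aestronglyMeasurable) hSmean
      (f := fun p => (∑ j, w j * (p.1 + p.2.2 j) * p.2.1) - p.1 * p.2.1)
      (g := fun i p => w i * (p.1 + p.2.2 i)) (by fun_prop) (fun i => by fun_prop) hF2
      (fun i => (hS4 i).mul' (hÃ4 i))
  · have hind : IndepFun (fun ω => (∑ i, w i * (A ω + R i ω)) - A ω) B μ :=
      hB_indep.comp (by fun_prop : Measurable fun p : ℝ × (Fin N → ℝ) =>
        (∑ j, w j * (p.1 + p.2 j)) - p.1) measurable_id
    simp_rw [hfactor]
    rw [hind.integral_mul_sq herr4.aestronglyMeasurable hB4.aestronglyMeasurable, hB2]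
    calc η ^ 2 / (1 + snrp) = η / (1 + snrp) * η := by ring
      _ ≤ _ := mul_le_mul_of_nonneg_right (hSNR w) hη

/-- `N = t` lower bound: with `Ã_i = A + R̃_i`, `B̃_i = B + S̃_i`, any linear decoder
`C̃ = Σ wᵢ Ãᵢ B̃ᵢ` satisfies
`E[(C̃ − AB)²] ≥ E[(Σ wᵢ Ãᵢ B − AB)²] ≥ η²/(1 + SNR_p)`. -/
theorem stmt_8 {Ω : Type*} [MeasurableSpace Ω] (μ : Measure Ω) [IsProbabilityMeasure μ]
    {N : ℕ} (A B : Ω → ℝ) (R S : Fin N → Ω → ℝ) (η snrp : ℝ)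
    (hη : 0 < η) (hsnrp : 0 ≤ snrp)
    (hAmeas : Measurable A) (hBmeas : Measurable B)
    (hRmeas : ∀ i, Measurable (R i)) (hSmeas : ∀ i, Measurable (S i))
    (hA4 : MemLp A 4 μ) (hB4 : MemLp B 4 μ)
    (hR4 : ∀ i, MemLp (R i) 4 μ) (hS4 : ∀ i, MemLp (S i) 4 μ)
    (hAB : IndepFun A B μ)
    (hB_indep : IndepFun (fun ω => (A ω, fun i => R i ω)) B μ)
    (hS_indep : IndepFun (fun ω => (A ω, B ω, fun i => R i ω)) (fun ω i => S i ω) μ)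
    (hAmean : ∫ ω, A ω ∂μ = 0) (hBmean : ∫ ω, B ω ∂μ = 0)
    (hA2 : ∫ ω, (A ω) ^ 2 ∂μ = η) (hB2 : ∫ ω, (B ω) ^ 2 ∂μ = η)
    (hRmean : ∀ i, ∫ ω, R i ω ∂μ = 0) (hSmean : ∀ i, ∫ ω, S i ω ∂μ = 0)
    (hSNR : ∀ w : Fin N → ℝ,
      η / (1 + snrp) ≤ ∫ ω, ((∑ i, w i * (A ω + R i ω)) - A ω) ^ 2 ∂μ) :
    ∀ w : Fin N → ℝ,
      (∫ ω, ((∑ i, w i * (A ω + R i ω) * B ω) - A ω * B ω) ^ 2 ∂μ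
        ≤ ∫ ω, ((∑ i, w i * (A ω + R i ω) * (B ω + S i ω)) - A ω * B ω) ^ 2 ∂μ) ∧
      η ^ 2 / (1 + snrp)
        ≤ ∫ ω, ((∑ i, w i * (A ω + R i ω) * B ω) - A ω * B ω) ^ 2 ∂μ :=
  stmt_8_general μ A B R S η snrp hA4 hB4 hR4 hS4 hB_indep hS_indep hB2 hSmean hSNR
end

section
/- Fix t ≥ 2, x > 0, η > 0. Let G = [g₂,...,g_t] and ρ > 0 be the minimum over all (t−1)×(t−1) submatrices of a (t−1)×t matrix G of the smallest singular value, all positive. For any reals β_i (i in a t-set S containing node t+1) with Σ_{i∈S}β_i ≠ 0 and Σ_{i∈S∖{t+1}} β_i g_i ≠ 0, and any α₁, α₂ > 0, the ratio η(Σ_{i∈S}β_i)² / [(x Σ_{i∈S}β_i + α₁ Σ_{i∈S∖{t+1}}β_i)² + α₂² ρ² Σ_{i∈S∖{t+1}} β_i²] is at most η / (x² − (α₁²/α₂²)(x² t / ρ²)), provided x² > (α₁²/α₂²)(x² t/ρ²). -/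
/-- Adversarial SNR bound for the layered scheme: the ratio
`η (Σ_{i∈S} βᵢ)² / [(x Σ_{i∈S} βᵢ + α₁ Σ' βᵢ)² + α₂² ρ² Σ' βᵢ²]` is at most
`η / (x² − (α₁²/α₂²)(x² t/ρ²))`, where `Σ'` denotes the sum over `S ∖ {t+1}`
(a set of `t − 1` elements), provided the latter denominator is positive. -/
theorem stmt_10 {ι : Type*} (t : ℕ) (ht : 2 ≤ t) (x η ρ α₁ α₂ : ℝ)
    (hx : 0 < x) (hη : 0 < η) (hρ : 0 < ρ) (hα₁ : 0 < α₁) (hα₂ : 0 < α₂)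
    (S' : Finset ι) (hcard : S'.card = t - 1)
    (g : ι → Fin (t - 1) → ℝ) (β : ι → ℝ) (b : ℝ)
    (hsum : b + ∑ i ∈ S', β i ≠ 0)
    (hg : ∑ i ∈ S', β i • g i ≠ 0)
    (hcond : (α₁ ^ 2 / α₂ ^ 2) * (x ^ 2 * t / ρ ^ 2) < x ^ 2) :
    η * (b + ∑ i ∈ S', β i) ^ 2 /
        ((x * (b + ∑ i ∈ S', β i) + α₁ * ∑ i ∈ S', β i) ^ 2
          + α₂ ^ 2 * ρ ^ 2 * ∑ i ∈ S', (β i) ^ 2)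
      ≤ η / (x ^ 2 - (α₁ ^ 2 / α₂ ^ 2) * (x ^ 2 * t / ρ ^ 2)) := by
  set u := ∑ i ∈ S', β i with hu
  set q := ∑ i ∈ S', (β i) ^ 2 with hq
  set s := b + u with hs
  have hqpos : 0 < q := by
    obtain ⟨i, hi, hne⟩ := Finset.exists_ne_zero_of_sum_ne_zero hg
    have hβ : β i ≠ 0 := fun h => hne (by simp [h])
    exact Finset.sum_pos' (fun j _ => sq_nonneg _) ⟨i, hi, by positivity⟩
  have hCS : u ^ 2 ≤ (t : ℝ) * q := by
    have h1 : u ^ 2 ≤ (S'.card : ℝ) * q := by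
      exact_mod_cast sq_sum_le_card_mul_sum_sq (s := S') (f := β)
    have h2 : (S'.card : ℝ) ≤ (t : ℝ) := by
      rw [hcard]; exact_mod_cast Nat.sub_le t 1
    nlinarith [hqpos.le]
  have ht' : (0 : ℝ) < t := by positivity
  have hD : 0 < x ^ 2 - α₁ ^ 2 / α₂ ^ 2 * (x ^ 2 * t / ρ ^ 2) := by linarith
  have hden : 0 < (x * s + α₁ * u) ^ 2 + α₂ ^ 2 * ρ ^ 2 * q := by positivity
  have key : s ^ 2 * (x ^ 2 - α₁ ^ 2 / α₂ ^ 2 * (x ^ 2 * t / ρ ^ 2)) ≤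
      (x * s + α₁ * u) ^ 2 + α₂ ^ 2 * ρ ^ 2 * q := by
    have hM : 0 < α₂ ^ 2 * ρ ^ 2 := by positivity
    have hDeq : x ^ 2 - α₁ ^ 2 / α₂ ^ 2 * (x ^ 2 * (t : ℝ) / ρ ^ 2) =
        (x ^ 2 * (α₂ ^ 2 * ρ ^ 2) - α₁ ^ 2 * (x ^ 2 * (t : ℝ))) / (α₂ ^ 2 * ρ ^ 2) := by
      field_simp
    rw [hDeq, ← mul_div_assoc, div_le_iff₀ hM]
    nlinarith [sq_nonneg (α₁ * x * t * s + α₂ ^ 2 * ρ ^ 2 * u), ht',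
      mul_nonneg (sq_nonneg (α₂ ^ 2 * ρ ^ 2)) (sub_nonneg.2 hCS),
      mul_nonneg (mul_nonneg ht'.le (mul_nonneg (sq_nonneg α₁) (sq_nonneg u))) hM.le]
  rw [div_le_div_iff₀ hden hD]
  nlinarith [mul_le_mul_of_nonneg_left key hη.le]
end
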